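/- arXiv:2304.13823 — 3 statements merged into one kernel-verified Lean document; each statement's English description precedes it below -/
import Mathlib

section
/- Let k ≥ 2 be an integer and let b_1, …, b_k be integers with b_i ≥ 2 for all i. Then, over ℚ, the loop matrix A_loop is invertible, and, setting Δ := b_1⋯b_k + (−1)^{k−1}, its inverse has entries: (A_loop^{-1})_{ij} = (−1)^{j−i}·(∏_{l < i} b_l)·(∏_{l > j} b_l)/Δ whenever i ≤ j, and (A_loop^{-1})_{ij} = (−1)^{k−i+j}·(∏_{j < l < i} b_l)/Δ whenever i > j. -/
/-!
Let `N` be `Δ` times the claimed inverse. Besides its diagonal, `loopMatrix b` has a single `1`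
in row `i`, at column `i + 1` (addition in `Fin k` wraps around), so row `i` of
`loopMatrix b * N` is `b i * N i m + N (i + 1) m`. Passing from row `i + 1` to row `i`, the
product in `N _ m` gains the factor `b i` and its sign flips, so off the diagonal the two terms
cancel; on the diagonal they are `∏ l, b l` and `(-1) ^ (k - 1)`, which add up to `Δ`. Finally
`Δ ≥ 2 ^ k - 1 > 0`.
-/

/-- The loop matrix of exponents `b : Fin k → ℚ`: entries `b i` on the diagonal,
`1` in positions `(i, i+1)` for `i = 0, …, k-2` and in position `(k-1, 0)`,
and `0` elsewhere. -/
def loopMatrix {k : ℕ} (b : Fin k → ℚ) : Matrix (Fin k) (Fin k) ℚ :=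
  Matrix.of fun i j =>
    if i = j then b i
    else if j.val = i.val + 1 ∨ (i.val = k - 1 ∧ j.val = 0) then 1 else 0

open Finset

theorem Finset.prod_univ_eq_prod_Iio_mul_mul_prod_Ioi {α M : Type*} [Fintype α] [LinearOrder α]
    [LocallyFiniteOrderBot α] [LocallyFiniteOrderTop α] [CommMonoid M] (f : α → M) (a : α) :
    ∏ x, f x = (∏ x ∈ Iio a, f x) * f a * ∏ x ∈ Ioi a, f x := by
  classical
  rw [prod_Iio_mul_eq_prod_Iic, ← prod_union (disjoint_left.2 fun x hx hx' => ?_)]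
  · congr; ext x; simp [le_or_gt]
  · exact (mem_Iic.1 hx).not_gt (mem_Ioi.1 hx')

theorem Finset.prod_add_neg_one_pow_pos_of_two_le {ι R : Type*} [Fintype ι] [Nonempty ι]
    [CommRing R] [LinearOrder R] [IsStrictOrderedRing R] (b : ι → R) (hb : ∀ i, 2 ≤ b i)
    (m : ℕ) :
    0 < ∏ i, b i + (-1) ^ m := by
  have hprod : (2 : R) ^ Fintype.card ι ≤ ∏ i, b i := by
    simpa using prod_le_prod (s := univ) (fun _ _ => zero_le_two) (fun i _ => hb i)
  have htwo : (2 : R) ≤ 2 ^ Fintype.card ι := le_self_pow₀ one_le_two Fintype.card_ne_zero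
  have hsign : (-1 : R) ≤ (-1) ^ m := by
    rcases neg_one_pow_eq_or R m with h | h <;> norm_num [h]
  linarith

namespace Fin
variable {M : Type*} [CommMonoid M] {n : ℕ}

theorem prod_Iio_succ_eq_prod_Iio_castSucc_mul (f : Fin (n + 1) → M) (j : Fin n) :
    ∏ l ∈ Iio j.succ, f l = (∏ l ∈ Iio j.castSucc, f l) * f j.castSucc := by
  have hIio : Iio j.succ = Iic j.castSucc := by ext l; simp only [mem_Iio, mem_Iic, le_castSucc_iff]
  rw [hIio, prod_Iio_mul_eq_prod_Iic]

theorem prod_Ioo_succ_eq_prod_Ioo_castSucc_mul (f : Fin (n + 1) → M) {i : Fin (n + 1)} {j : Fin n}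
    (h : i < j.castSucc) :
    ∏ l ∈ Ioo i j.succ, f l = (∏ l ∈ Ioo i j.castSucc, f l) * f j.castSucc := by
  have hIoo : Ioo i j.succ = Ioc i j.castSucc := by
    ext l; simp only [mem_Ioo, mem_Ioc, le_castSucc_iff]
  rw [hIoo, prod_Ioo_mul_eq_prod_Ioc h]

theorem prod_Ioi_eq_prod_Ioo_last_mul (f : Fin (n + 1) → M) {i : Fin (n + 1)} (h : i < last n) :
    ∏ l ∈ Ioi i, f l = (∏ l ∈ Ioo i (last n), f l) * f (last n) := by
  have hIoi : Ioi i = Ioc i (last n) := by ext l; simp only [mem_Ioi, mem_Ioc, le_last, and_true]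
  rw [hIoi, prod_Ioo_mul_eq_prod_Ioc h]

end Fin

theorem loopMatrix_apply_eq {n : ℕ} (b : Fin (n + 2) → ℚ) (i j : Fin (n + 2)) :
    loopMatrix b i j = (if i = j then b i else 0) + if i + 1 = j then 1 else 0 := by
  have hsucc (j : Fin (n + 2)) :
      i + 1 = j ↔ j.val = i.val + 1 ∨ (i.val = n + 2 - 1 ∧ j.val = 0) := by
    rw [Fin.ext_iff, Fin.val_add_one]
    split_ifs with h
    · simp only [h, Fin.val_last]; omega
    · have := Fin.val_lt_last h; omega
  have hne : i + 1 ≠ i := by rw [Ne, hsucc]; omega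
  simp only [loopMatrix, Matrix.of_apply, ← hsucc]
  by_cases h : i = j
  · subst h; simp [hne]
  · simp [h]

theorem loopMatrix_mul_apply {n : ℕ} (b : Fin (n + 2) → ℚ)
    (M : Matrix (Fin (n + 2)) (Fin (n + 2)) ℚ) (i j : Fin (n + 2)) :
    (loopMatrix b * M) i j = b i * M i j + M (i + 1) j := by
  simp only [Matrix.mul_apply, loopMatrix_apply_eq, add_mul, ite_mul, zero_mul, one_mul,
    sum_add_distrib, sum_ite_eq, mem_univ, if_true]

def loopMatrixAdj {k : ℕ} (b : Fin k → ℚ) : Matrix (Fin k) (Fin k) ℚ :=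
  Matrix.of fun i j =>
    if i ≤ j then (-1) ^ (j.val - i.val) * (∏ l ∈ Iio i, b l) * ∏ l ∈ Ioi j, b l
    else (-1) ^ (k - i.val + j.val) * ∏ l ∈ Ioo j i, b l

section
variable {n : ℕ} (b : Fin (n + 2) → ℚ)

theorem loopMatrixAdj_row_castSucc (j : Fin (n + 1)) (m : Fin (n + 2)) :
    b j.castSucc * loopMatrixAdj b j.castSucc m + loopMatrixAdj b j.succ m =
      if j.castSucc = m then ∏ l, b l + (-1) ^ (n + 1) else 0 := by
  simp only [loopMatrixAdj, Matrix.of_apply]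
  rcases lt_trichotomy j.castSucc m with h | rfl | h
  · have h' : j.succ ≤ m := Fin.castSucc_lt_iff_succ_le.mp h
    obtain ⟨e, he, he'⟩ : ∃ e, m.val - j.castSucc.val = e + 1 ∧ m.val - j.succ.val = e :=
      ⟨_, by simp only [Fin.lt_def, Fin.val_castSucc, Fin.val_succ] at h ⊢; omega, rfl⟩
    rw [if_pos h.le, if_pos h', if_neg h.ne, Fin.prod_Iio_succ_eq_prod_Iio_castSucc_mul, he, he',
      pow_succ]
    ring
  · have hexp : n + 2 - j.succ.val + j.castSucc.val = n + 1 := by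
      simp only [Fin.val_succ, Fin.val_castSucc]; omega
    have hempty : Ioo j.castSucc j.succ = ∅ := by
      ext l; simp [← Fin.le_castSucc_iff]
    rw [if_pos le_rfl, if_neg (Fin.castSucc_lt_succ (i := j)).not_ge, if_pos rfl, hexp, hempty,
      prod_univ_eq_prod_Iio_mul_mul_prod_Ioi _ j.castSucc, prod_empty, Nat.sub_self]
    ring
  · have hexp : n + 2 - j.castSucc.val + m.val = n + 2 - j.succ.val + m.val + 1 := by
      simp only [Fin.lt_def, Fin.val_castSucc] at h; simp only [Fin.val_succ, Fin.val_castSucc]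
      omega
    rw [if_neg h.not_ge, if_neg (h.trans (Fin.castSucc_lt_succ (i := j))).not_ge, if_neg h.ne',
      Fin.prod_Ioo_succ_eq_prod_Ioo_castSucc_mul _ h, hexp, pow_succ]
    ring

theorem loopMatrixAdj_row_last (m : Fin (n + 2)) :
    b (Fin.last _) * loopMatrixAdj b (Fin.last _) m + loopMatrixAdj b 0 m =
      if Fin.last _ = m then ∏ l, b l + (-1) ^ (n + 1) else 0 := by
  have hIio : Iio (0 : Fin (n + 2)) = ∅ := by rw [← bot_eq_zero, Iio_bot]
  have hIoi : Ioi (Fin.last (n + 1)) = ∅ := by rw [← Fin.top_eq_last, Ioi_top]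
  simp only [loopMatrixAdj, Matrix.of_apply, hIio, prod_empty]
  rcases (Fin.le_last m).lt_or_eq with h | rfl
  · have hexp : n + 2 - (Fin.last (n + 1)).val + m.val = m.val + 1 := by
      simp only [Fin.val_last]; omega
    rw [if_neg h.not_ge, if_pos (Fin.zero_le m), if_neg h.ne', hexp,
      Fin.prod_Ioi_eq_prod_Ioo_last_mul _ h, pow_succ, Fin.val_zero, Nat.sub_zero]
    ring
  · rw [if_pos le_rfl, if_pos (Fin.zero_le _), if_pos rfl,
      prod_univ_eq_prod_Iio_mul_mul_prod_Ioi _ (Fin.last _), hIoi, prod_empty, Nat.sub_self,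
      Fin.val_last, Fin.val_zero, Nat.sub_zero]
    ring

theorem loopMatrix_mul_loopMatrixAdj :
    loopMatrix b * loopMatrixAdj b = (∏ l, b l + (-1) ^ (n + 1)) • (1 : Matrix _ _ ℚ) := by
  ext i m
  simp only [loopMatrix_mul_apply, Matrix.smul_apply, Matrix.one_apply, smul_eq_mul, mul_ite,
    mul_one, mul_zero]
  induction i using Fin.lastCases with
  | last => rw [Fin.last_add_one, loopMatrixAdj_row_last]
  | cast j => rw [Fin.coeSucc_eq_succ, loopMatrixAdj_row_castSucc]

end

/-- For integers `b i ≥ 2`, the loop matrix is invertible over `ℚ`, and with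
`Δ = b 1 ⋯ b k + (-1)^(k-1)`, its inverse has entries
`(-1)^(j-i) * (∏_{l < i} b l) * (∏_{l > j} b l) / Δ` for `i ≤ j` and
`(-1)^(k-i+j) * (∏_{j < l < i} b l) / Δ` for `i > j`. -/
theorem loopMatrix_inv {k : ℕ} (hk : 2 ≤ k) (b : Fin k → ℤ) (hb : ∀ i, 2 ≤ b i) :
    IsUnit (loopMatrix fun i => (b i : ℚ)) ∧
      ∀ i j : Fin k,
        (loopMatrix fun i => (b i : ℚ))⁻¹ i j =
          if i ≤ j then
            (-1 : ℚ) ^ (j.val - i.val) * (∏ l ∈ Finset.Iio i, (b l : ℚ)) *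
              (∏ l ∈ Finset.Ioi j, (b l : ℚ)) /
              ((∏ i, (b i : ℚ)) + (-1 : ℚ) ^ (k - 1))
          else
            (-1 : ℚ) ^ (k - i.val + j.val) * (∏ l ∈ Finset.Ioo j i, (b l : ℚ)) /
              ((∏ i, (b i : ℚ)) + (-1 : ℚ) ^ (k - 1)) := by
  obtain ⟨n, rfl⟩ : ∃ n, k = n + 2 := ⟨k - 2, by omega⟩
  set Δ : ℚ := ∏ i, (b i : ℚ) + (-1) ^ (n + 1)
  have hΔ : Δ ≠ 0 :=
    (prod_add_neg_one_pow_pos_of_two_le _ (fun i => by exact_mod_cast hb i) _).ne'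
  have hinv :
      loopMatrix (fun i => (b i : ℚ)) * (Δ⁻¹ • loopMatrixAdj fun i => (b i : ℚ)) = 1 := by
    rw [Matrix.mul_smul, loopMatrix_mul_loopMatrixAdj, smul_smul, inv_mul_cancel₀ hΔ, one_smul]
  refine ⟨(Matrix.isUnit_iff_isUnit_det _).2 (Matrix.isUnit_det_of_right_inverse hinv),
    fun i j => ?_⟩
  rw [Matrix.inv_eq_right_inv hinv, Matrix.smul_apply, loopMatrixAdj, Matrix.of_apply, smul_eq_mul]
  -- `exact` rather than `rw`: the goal's `n + 2 - 1` is `n + 1` only up to unfolding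
  split_ifs <;> exact inv_mul_eq_div _ _
end

section
/- Let k ≥ 2 be an integer, let b_1, …, b_k be integers with b_i ≥ 2, let A_loop be the associated loop matrix over ℚ, and let q := A_loop^{-1}·𝟙 where 𝟙 is the all-ones vector (so q_i is the i-th row sum of A_loop^{-1}, the i-th charge). Then for all indices 1 ≤ i < j ≤ k, the rational number q_j − (−1)^{j−i}·(b_i·b_{i+1}⋯b_{j−1})·q_i is an integer. -/
open Matrix

theorem sub_neg_one_pow_mul_prod_mul_mem {R : Type*} [CommRing R] (S : Subring R)
    (b q : ℕ → R) {i j : ℕ} (hij : i ≤ j) (hb : ∀ m, b m ∈ S)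
    (hstep : ∀ m < j, b m * q m + q (m + 1) ∈ S) :
    q j - (-1) ^ (j - i) * (∏ l ∈ Finset.Ico i j, b l) * q i ∈ S := by
  induction j, hij using Nat.le_induction with
  | base => simp
  | succ n hin ih =>
    have hrec : q (n + 1) - (-1) ^ (n + 1 - i) * (∏ l ∈ Finset.Ico i (n + 1), b l) * q i =
        (b n * q n + q (n + 1))
          - b n * (q n - (-1) ^ (n - i) * (∏ l ∈ Finset.Ico i n, b l) * q i) := by
      rw [Finset.prod_Ico_succ_top hin, Nat.sub_add_comm hin, pow_succ]
      ring
    rw [hrec]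
    exact S.sub_mem (hstep n n.lt_succ_self)
      (S.mul_mem (hb n) (ih fun m hm => hstep m (hm.trans n.lt_succ_self)))

theorem loopMatrix_mulVec_apply_of_lt {k : ℕ} (b v : Fin k → ℚ) (m : Fin k)
    (hm : m.val + 1 < k) :
    (loopMatrix b *ᵥ v) m = b m * v m + v ⟨m.val + 1, hm⟩ := by
  have hne : m ≠ ⟨m.val + 1, hm⟩ := fun h => by simpa using congrArg Fin.val h
  rw [mulVec, dotProduct, Fintype.sum_eq_add m ⟨m.val + 1, hm⟩ hne]
  · simp [loopMatrix, hne]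
  · rintro l ⟨hlm, hl⟩
    have hl' : l.val ≠ m.val + 1 := fun h => hl (Fin.ext h)
    simp [loopMatrix, Ne.symm hlm, hl', show m.val ≠ k - 1 by omega]

/-- `A * A⁻¹` is `1` or, for singular `A` (where `A⁻¹ = 0` by convention), `0`. -/
theorem mulVec_nonsing_inv_mulVec_mem_range {n R : Type*} [Fintype n] [DecidableEq n]
    [CommRing R] (A : Matrix n n R) (v : n → ℤ) (m : n) :
    (A *ᵥ (A⁻¹ *ᵥ fun l => (v l : R))) m ∈ (Int.castRingHom R).range := by
  rw [mulVec_mulVec]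
  by_cases hA : IsUnit A.det
  · simp [Matrix.mul_nonsing_inv A hA]
  · simp [Matrix.nonsing_inv_apply_not_isUnit A hA]

theorem loopMatrix_charge_congruence_general {k : ℕ} (b : Fin k → ℤ)
    (q : Fin k → ℚ)
    (hq : ∀ i, q i = ∑ j, (loopMatrix fun l => (b l : ℚ))⁻¹ i j) :
    ∀ i j : Fin k, i < j →
      ∃ z : ℤ,
        q j - (-1 : ℚ) ^ (j.val - i.val) * (∏ l ∈ Finset.Ico i j, (b l : ℚ)) * q i
          = z := by
  intro i j hij
  set A := loopMatrix fun l => (b l : ℚ)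
  have hqA : q = A⁻¹ *ᵥ fun _ => ((1 : ℤ) : ℚ) := funext fun l => by
    simp [hq, mulVec, dotProduct]
  set bN : ℕ → ℚ := fun n => if h : n < k then (b ⟨n, h⟩ : ℚ) else 0
  set qN : ℕ → ℚ := fun n => if h : n < k then q ⟨n, h⟩ else 0
  have hstep : ∀ m < j.val, bN m * qN m + qN (m + 1) ∈ (Int.castRingHom ℚ).range := by
    intro m hm
    have hm' : m + 1 < k := by omega
    have hrow := loopMatrix_mulVec_apply_of_lt (fun l => (b l : ℚ)) q ⟨m, by omega⟩ hm'
    simp only [bN, qN, dif_pos hm', dif_pos (show m < k by omega)]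
    rw [← hrow, hqA]
    exact mulVec_nonsing_inv_mulVec_mem_range A _ _
  have hbN : ∀ m, bN m ∈ (Int.castRingHom ℚ).range := fun m => by
    by_cases h : m < k <;> simp [bN, h]
  obtain ⟨z, hz⟩ := sub_neg_one_pow_mul_prod_mul_mem _ bN qN hij.le hbN hstep
  refine ⟨z, ?_⟩
  rw [← Fin.map_valEmbedding_Ico, Finset.prod_map] at hz
  simpa [bN, qN] using hz.symm

/-- Let `q i` be the `i`-th row sum of the inverse of the loop matrix (the `i`-th charge).
Then for `i < j`, the rational number `q j - (-1)^(j-i) * (b i * ⋯ * b (j-1)) * q i`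
is an integer. -/
theorem loopMatrix_charge_congruence {k : ℕ} (hk : 2 ≤ k) (b : Fin k → ℤ)
    (hb : ∀ i, 2 ≤ b i)
    (q : Fin k → ℚ)
    (hq : ∀ i, q i = ∑ j, (loopMatrix fun l => (b l : ℚ))⁻¹ i j) :
    ∀ i j : Fin k, i < j →
      ∃ z : ℤ,
        q j - (-1 : ℚ) ^ (j.val - i.val) * (∏ l ∈ Finset.Ico i j, (b l : ℚ)) * q i
          = z :=
  loopMatrix_charge_congruence_general b q hq
end

section
/- Let k ≥ 3 be an integer, let b_1, …, b_k be integers with b_i ≥ 2, let A_loop be the associated loop matrix over ℚ, and let q := A_loop^{-1}·𝟙 be the vector of row sums of A_loop^{-1}. Suppose there is a positive integer d such that for every i, d·q_i is an integer with 0 < d·q_i < d. Then for every i with 1 ≤ i ≤ k−2, one has q_{k−1}·(A_loop^{-1})_{i,k} ≥ q_i·(A_loop^{-1})_{k−1,k}. -/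
open Matrix Fin.NatCast

section LoopMatrix

variable {n : ℕ} (b : Fin (n + 2) → ℚ)

theorem loopMatrix_apply (i j : Fin (n + 2)) :
    loopMatrix b i j = if i = j then b i else if j = i + 1 then 1 else 0 := by
  have hsucc : j.val = i.val + 1 ∨ (i.val = n + 2 - 1 ∧ j.val = 0) ↔ j = i + 1 := by
    rw [Fin.ext_iff, Fin.val_add_one]
    split_ifs with h <;> simp only [Fin.ext_iff, Fin.val_last] at h <;> omega
  simp only [loopMatrix, Matrix.of_apply, hsucc]

theorem loopMatrix_mulVec_apply (v : Fin (n + 2) → ℚ) (i : Fin (n + 2)) :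
    (loopMatrix b *ᵥ v) i = b i * v i + v (i + 1) := by
  have hi : i ≠ i + 1 := by
    rw [Ne, Fin.ext_iff, Fin.val_add_one]
    split_ifs with h <;> simp only [Fin.ext_iff, Fin.val_last] at h <;> omega
  rw [mulVec, dotProduct, Fintype.sum_eq_add i (i + 1) hi]
  · simp [loopMatrix_apply]
  · rintro j ⟨hji, hj⟩
    simp [loopMatrix_apply, Ne.symm hji, hj]

/-- The cast `ℕ → Fin (n + 2)` reduces mod `n + 2`, so this is the cyclic row equation with
indices in `ℕ`. -/
theorem loopMatrix_mulVec_natCast (v : Fin (n + 2) → ℚ) (m : ℕ) :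
    (loopMatrix b *ᵥ v) m = b m * v m + v (m + 1 : ℕ) := by
  rw [loopMatrix_mulVec_apply, Nat.cast_succ]

variable {b} {v : Fin (n + 2) → ℚ}

theorem loopMatrix_recurrence_of_mulVec_eq_one (hv : loopMatrix b *ᵥ v = 1) (j : ℕ) :
    b j * v j + v (j + 1 : ℕ) = 1 := by
  rw [← loopMatrix_mulVec_natCast, hv, Pi.one_apply]

theorem loopMatrix_recurrence_of_mulVec_eq_single
    (hv : loopMatrix b *ᵥ v = Pi.single (Fin.last (n + 1)) 1) {j : ℕ} (hj : j ≤ n) :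
    b j * v j + v (j + 1 : ℕ) = 0 := by
  rw [← loopMatrix_mulVec_natCast, hv, Pi.single_apply, if_neg]
  simp [Fin.ext_iff, Nat.mod_eq_of_lt (show j < n + 2 by omega)]
  omega

theorem loopMatrix_wrap_of_mulVec_eq_single
    (hv : loopMatrix b *ᵥ v = Pi.single (Fin.last (n + 1)) 1) :
    b (n + 1 : ℕ) * v (n + 1 : ℕ) + v (0 : ℕ) = 1 := by
  have h := loopMatrix_mulVec_natCast b v (n + 1)
  rw [hv, show ((n + 1 + 1 : ℕ) : Fin (n + 2)) = ((0 : ℕ) : Fin (n + 2)) by simp,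
    Fin.natCast_eq_last, Pi.single_eq_same] at h
  rw [Fin.natCast_eq_last, h]

end LoopMatrix

section Recurrence

variable {K : Type*} [CommRing K] [LinearOrder K] [IsStrictOrderedRing K] {b q x : ℕ → K}

theorem abs_le_abs_of_recurrence {m : ℕ} (hb : ∀ j < m, 1 ≤ |b j|)
    (hx : ∀ j < m, b j * x j + x (j + 1) = 0) : |x 0| ≤ |x m| := by
  induction m with
  | zero => rfl
  | succ m ih =>
    calc |x 0| ≤ |x m| := ih (fun j hj => hb j (by omega)) (fun j hj => hx j (by omega))
      _ ≤ |b m| * |x m| := le_mul_of_one_le_left (abs_nonneg _) (hb m m.lt_succ_self)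
      _ = |x (m + 1)| := by
        rw [← abs_mul, eq_neg_of_add_eq_zero_right (hx m m.lt_succ_self), abs_neg]

theorem nonpos_of_recurrence_of_wrap {m : ℕ} (hb : ∀ j ≤ m + 1, 1 ≤ b j)
    (hx : ∀ j ≤ m, b j * x j + x (j + 1) = 0) (hwrap : b (m + 1) * x (m + 1) + x 0 = 1) :
    x m ≤ 0 := by
  by_contra! hpos
  have hgrowth : |x 0| ≤ x m := by
    simpa [abs_of_pos hpos] using abs_le_abs_of_recurrence (b := b) (x := x) (m := m)
      (fun j hj => (hb j (by omega)).trans (le_abs_self _)) (fun j hj => hx j hj.le)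
  have hx0 : x 0 = 1 + b (m + 1) * b m * x m := by
    linear_combination hwrap - b (m + 1) * hx m le_rfl
  have hbb : x m ≤ b (m + 1) * b m * x m :=
    le_mul_of_one_le_left hpos.le (one_le_mul_of_one_le_of_one_le (hb _ le_rfl) (hb m (by omega)))
  linarith [le_abs_self (x 0)]

theorem mul_le_mul_swap_of_recurrence {m i : ℕ} (hi : i ≤ m) (hb : ∀ j < m, 1 ≤ b j)
    (hq : ∀ j < m, b j * q j + q (j + 1) = 1) (hx : ∀ j < m, b j * x j + x (j + 1) = 0)
    (hxm : x m ≤ 0) : q i * x m ≤ q m * x i := by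
  suffices h : 0 ≤ q m * x i - q i * x m ∧ q m * x i - q i * x m ≤ -x m by linarith [h.1]
  induction hi using Nat.decreasingInduction with
  | self => simpa using hxm
  | of_succ j hj ih =>
    obtain ⟨h0, h1⟩ := ih
    have hstep : b j * (q m * x j - q j * x m) = -x m - (q m * x (j + 1) - q (j + 1) * x m) := by
      linear_combination q m * hx j hj - x m * hq j hj
    have hbj := hb j hj
    have hdefect : 0 ≤ q m * x j - q j * x m :=
      nonneg_of_mul_nonneg_right (a := b j) (by linarith) (by linarith)
    exact ⟨hdefect, (le_mul_of_one_le_left hdefect hbj).trans (by linarith)⟩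

end Recurrence

theorem loopMatrix_lastColumn_cone {k : ℕ} (hk : 3 ≤ k) (b : Fin k → ℤ)
    (hb : ∀ i, 2 ≤ b i)
    (q : Fin k → ℚ)
    (hq : ∀ i, q i = ∑ j, (loopMatrix fun l => (b l : ℚ))⁻¹ i j) :
    ∀ i : Fin k, i.val < k - 2 →
      q i * (loopMatrix fun l => (b l : ℚ))⁻¹ ⟨k - 2, by omega⟩ ⟨k - 1, by omega⟩ ≤
        q ⟨k - 2, by omega⟩ * (loopMatrix fun l => (b l : ℚ))⁻¹ i ⟨k - 1, by omega⟩ := by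
  obtain ⟨n, rfl⟩ : ∃ n, k = n + 2 := ⟨k - 2, by omega⟩
  intro i hi
  set B : Fin (n + 2) → ℚ := fun l => b l
  set A := loopMatrix B
  by_cases hA : IsUnit A.det
  swap
  · simp [Matrix.nonsing_inv_apply_not_isUnit A hA]
  set x : Fin (n + 2) → ℚ := fun j => A⁻¹ j (Fin.last (n + 1))
  have hAq : A *ᵥ q = 1 := by
    rw [show q = A⁻¹ *ᵥ 1 from funext fun i => by simp [hq, mulVec, dotProduct], mulVec_mulVec,
      mul_nonsing_inv A hA, one_mulVec]
  have hAx : A *ᵥ x = Pi.single (Fin.last (n + 1)) 1 := by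
    rw [show x = A⁻¹ *ᵥ Pi.single (Fin.last (n + 1)) 1 from (mulVec_single_one _ _).symm,
      mulVec_mulVec, mul_nonsing_inv A hA, one_mulVec]
  have hB : ∀ j : ℕ, 1 ≤ B j := fun j => by
    simp only [B]; exact_mod_cast (hb j).trans' (by norm_num)
  have hxn : x n ≤ 0 := nonpos_of_recurrence_of_wrap (fun j _ => hB j)
    (fun _ => loopMatrix_recurrence_of_mulVec_eq_single hAx)
    (loopMatrix_wrap_of_mulVec_eq_single hAx)
  have key := mul_le_mul_swap_of_recurrence (b := fun j => B j) (q := fun j => q j)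
    (x := fun j => x j) (show i.val ≤ n by omega) (fun j _ => hB j)
    (fun j _ => loopMatrix_recurrence_of_mulVec_eq_one hAq j)
    (fun _ hj => loopMatrix_recurrence_of_mulVec_eq_single hAx hj.le) hxn
  have hm : (⟨n + 2 - 2, by omega⟩ : Fin (n + 2)) = n := Fin.ext (by simp [Nat.mod_eq_of_lt])
  have hl : (⟨n + 2 - 1, by omega⟩ : Fin (n + 2)) = Fin.last (n + 1) := Fin.ext (by simp)
  rw [hm, hl]
  simpa only [Fin.cast_val_eq_self] using key
end
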